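/- For k-forms ω with ‖ω‖_{B^r} < ∞ and r ≥ 2, the Lie derivative satisfies ‖𝓛_v ω‖_{B^{r−1}} ≤ ‖v‖·‖ω‖_{B^r} for every v ∈ ℝⁿ. -/

import Mathlib

/-! Pointed chains: finitely supported functions from points of `E` to "k-vectors" in `V`,
difference chains, and the `B^r` norms of J. Harrison's theory of differential chains. -/

open Finsupp

variable {E V : Type*} [NormedAddCommGroup E] [NormedSpace ℝ E]
  [NormedAddCommGroup V] [NormedSpace ℝ V]

/-- The difference chain `Δ^j_U (p; α)`, for a list `U = [u₁,…,u_j]` of vectors. -/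
noncomputable def diffChain : List E → E → V → (E →₀ V)
  | [], p, α => Finsupp.single p α
  | u :: U, p, α => Finsupp.mapDomain (· + u) (diffChain U p α) - diffChain U p α

/-- The weight `|Δ^j_U(p;α)|_j := ‖u₁‖⋯‖u_j‖‖α‖` of a difference chain. -/
noncomputable def dweight (U : List E) (α : V) : ℝ := (U.map fun u => ‖u‖).prod * ‖α‖

/-- The `r`-norm `‖A‖_{B^r}` on pointed chains: the infimum of `Σᵢ |Δ^{jᵢ}_{Uᵢ}(pᵢ;αᵢ)|_{jᵢ}`
over all decompositions `A = Σᵢ Δ^{jᵢ}_{Uᵢ}(pᵢ;αᵢ)` with all `jᵢ ≤ r`. -/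
noncomputable def Bnorm (r : ℕ) (A : E →₀ V) : ℝ :=
  sInf {s : ℝ | ∃ L : List (List E × E × V),
    (∀ t ∈ L, t.1.length ≤ r) ∧
    A = (L.map fun t => diffChain t.1 t.2.1 t.2.2).sum ∧
    s = (L.map fun t => dweight t.1 t.2.2).sum}

/-- Evaluation (integration) of a `k`-form `ω` (as a function of a point and a `k`-vector)
on a pointed chain `A`: `ω(Σ(pᵢ;αᵢ)) = Σ ω(pᵢ;αᵢ)`. -/
noncomputable def pairF (ω : E → V → ℝ) (A : E →₀ V) : ℝ := A.sum fun p α => ω p α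

/-- `C` is a `B^r`-bound for the form `ω`: `|ω(Δ^j_U(p;α))| ≤ C·‖u₁‖⋯‖u_j‖‖α‖` for all
difference chains of order `j ≤ r`.  Thus `‖ω‖_{B^r} = max{|ω|_{B⁰},…,|ω|_{B^r}}` is the
least such `C ≥ 0`. -/
def IsBBound (r : ℕ) (ω : E → V → ℝ) (C : ℝ) : Prop :=
  ∀ (U : List E) (p : E) (α : V), U.length ≤ r →
    |pairF ω (diffChain U p α)| ≤ C * dweight U α

/-! Along a line, `t ↦ ω(q + t v; β)` is Lipschitz (a `B¹` bound) and has second differences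
`O(|s||u|)` (a `B²` bound). Such a function is differentiable everywhere: by Rademacher it is
differentiable at points `b` arbitrarily close to `x`, and its difference quotients at `x` stay
within `O(|b - x|)` of those at `b`, so they are Cauchy. Then `𝓛_v ω(Δ^j_U(p;α))` is the derivative
at `0` of `t ↦ ω(Δ^j_U(p + t v;α))`, whose increment is `ω(Δ^{j+1}_{(t v, U)}(p;α))`, of size at
most `C ‖v‖ |t| ‖u₁‖⋯‖u_j‖‖α‖` as long as `j + 1 ≤ r`. -/

open Filter Topology
open scoped NNReal

lemma cauchy_map_of_forall_exists_eventually_dist_lt {α β : Type*} [PseudoMetricSpace α]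
    {l : Filter β} [l.NeBot] {f : β → α} (h : ∀ ε > 0, ∃ c, ∀ᶠ x in l, dist (f x) c < ε) :
    Cauchy (map f l) := by
  refine cauchy_map_iff'.2 fun s hs => ?_
  obtain ⟨ε, hε, hεs⟩ := Metric.mem_uniformity_dist.1 hs
  obtain ⟨c, hc⟩ := h (ε / 2) (half_pos hε)
  refine (hc.prod_mk hc).mono fun x ⟨hx₁, hx₂⟩ => ?_
  exact hεs <| (dist_triangle_right _ _ c).trans_lt (add_halves ε ▸ add_lt_add hx₁ hx₂)

lemma abs_slope_sub_slope_le_of_secondDiff_le {φ : ℝ → ℝ} {K : ℝ}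
    (hφ : ∀ a s u, |φ (a + s + u) - φ (a + s) - φ (a + u) + φ a| ≤ K * (|s| * |u|))
    (a b : ℝ) {t : ℝ} (ht : t ≠ 0) :
    |t⁻¹ * (φ (a + t) - φ a) - t⁻¹ * (φ (b + t) - φ b)| ≤ K * |b - a| := by
  have h := hφ a (b - a) t
  rw [add_sub_cancel] at h
  rw [← mul_sub, abs_mul, abs_inv, inv_mul_le_iff₀ (abs_pos.2 ht), abs_sub_comm]
  calc _ = |φ (b + t) - φ b - φ (a + t) + φ a| := by ring_nf
    _ ≤ |t| * (K * |b - a|) := by linarith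

theorem LipschitzWith.differentiableAt_of_secondDiff_le {φ : ℝ → ℝ} {L : ℝ≥0} {K : ℝ}
    (hφ : LipschitzWith L φ)
    (h2 : ∀ a s u, |φ (a + s + u) - φ (a + s) - φ (a + u) + φ a| ≤ K * (|s| * |u|)) (x : ℝ) :
    DifferentiableAt ℝ φ x := by
  suffices Cauchy (map (fun t => t⁻¹ * (φ (x + t) - φ x)) (𝓝[≠] 0)) by
    obtain ⟨d, hd⟩ := cauchy_map_iff_exists_tendsto.1 this
    exact (hasDerivAt_iff_tendsto_slope_zero.2 hd).differentiableAt
  refine cauchy_map_of_forall_exists_eventually_dist_lt fun ε hε => ?_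
  have hdense : Dense {b | DifferentiableAt ℝ φ b} :=
    MeasureTheory.Measure.dense_of_ae (μ := MeasureTheory.volume) hφ.ae_differentiableAt
  obtain ⟨b, hbx, hb⟩ := hdense.inter_open_nonempty {b | K * |b - x| < ε / 2}
    (isOpen_lt (by fun_prop) continuous_const) ⟨x, by simpa using half_pos hε⟩
  refine ⟨deriv φ b, ?_⟩
  filter_upwards [Metric.tendsto_nhds.1 hb.hasDerivAt.tendsto_slope_zero (ε / 2) (half_pos hε),
    self_mem_nhdsWithin] with t hbt ht
  rw [smul_eq_mul] at hbt
  calc _ ≤ dist (t⁻¹ * (φ (x + t) - φ x)) (t⁻¹ * (φ (b + t) - φ b)) + dist _ (deriv φ b) :=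
        dist_triangle _ _ _
    _ < ε / 2 + ε / 2 :=
        add_lt_add ((abs_slope_sub_slope_le_of_secondDiff_le h2 x b ht).trans_lt hbx) hbt
    _ = ε := add_halves ε

section Chains

omit [NormedSpace ℝ E] [NormedSpace ℝ V]

lemma diffChain_add_point (U : List E) (p u : E) (α : V) :
    diffChain U (p + u) α = Finsupp.mapDomain (· + u) (diffChain U p α) := by
  induction U generalizing p with
  | nil => simp [diffChain, Finsupp.mapDomain_single]
  | cons w U ih =>
    simp only [diffChain, ih, Finsupp.mapDomain_sub, ← Finsupp.mapDomain_comp]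
    congr 2
    funext x
    simp [add_right_comm]

lemma dweight_cons (u : E) (U : List E) (α : V) : dweight (u :: U) α = ‖u‖ * dweight U α := by
  simp [dweight, mul_assoc]

lemma dweight_nonneg (U : List E) (α : V) : 0 ≤ dweight U α :=
  mul_nonneg (List.prod_nonneg <| by simp) (norm_nonneg α)

lemma IsBBound.mono {ω : E → V → ℝ} {r s : ℕ} {C : ℝ} (hω : IsBBound r ω C) (hs : s ≤ r) :
    IsBBound s ω C :=
  fun U p α hU => hω U p α (hU.trans hs)

end Chains

section LinearForms

variable (ω : E → V →ₗ[ℝ] ℝ)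

omit [NormedAddCommGroup E] [NormedSpace ℝ E] in
lemma pairF_sub (A B : E →₀ V) :
    pairF (fun p α => ω p α) (A - B) = pairF (fun p α => ω p α) A - pairF (fun p α => ω p α) B :=
  Finsupp.sum_sub_index fun p => map_sub (ω p)

omit [NormedSpace ℝ E] in
lemma pairF_mapDomain_add (u : E) (A : E →₀ V) :
    pairF (fun p α => ω p α) (Finsupp.mapDomain (· + u) A) = A.sum fun q β => ω (q + u) β :=
  Finsupp.sum_mapDomain_index (fun p => map_zero (ω p)) fun p => map_add (ω p)

omit [NormedSpace ℝ E] in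
lemma pairF_diffChain_nil (p : E) (α : V) :
    pairF (fun p α => ω p α) (diffChain [] p α) = ω p α :=
  Finsupp.sum_single_index (map_zero (ω p))

omit [NormedSpace ℝ E] in
lemma pairF_diffChain_cons (u : E) (U : List E) (p : E) (α : V) :
    pairF (fun p α => ω p α) (diffChain (u :: U) p α)
      = pairF (fun p α => ω p α) (diffChain U (p + u) α)
        - pairF (fun p α => ω p α) (diffChain U p α) := by
  rw [diffChain, pairF_sub, diffChain_add_point]

lemma hasDerivAt_pairF_mapDomain_add_smul (v : E)
    (hω : ∀ q β, DifferentiableAt ℝ (fun t : ℝ => ω (q + t • v) β) 0) (A : E →₀ V) :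
    HasDerivAt (fun t : ℝ => pairF (fun p α => ω p α) (Finsupp.mapDomain (· + t • v) A))
      (pairF (fun p α => deriv (fun t : ℝ => ω (p + t • v) α) 0) A) 0 := by
  simp only [pairF_mapDomain_add]
  exact HasDerivAt.fun_sum fun q _ => (hω q (A q)).hasDerivAt

end LinearForms

namespace IsBBound

variable {ω : E → V →ₗ[ℝ] ℝ} {r : ℕ} {C : ℝ}

lemma abs_pairF_diffChain_add_smul_sub_le (hω : IsBBound r (fun p α => ω p α) C) {U : List E}
    (hU : U.length < r) (p v : E) (α : V) (t : ℝ) :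
    |pairF (fun p α => ω p α) (diffChain U (p + t • v) α)
        - pairF (fun p α => ω p α) (diffChain U p α)| ≤ ‖v‖ * C * dweight U α * |t| := by
  rw [← pairF_diffChain_cons]
  calc _ ≤ C * dweight (t • v :: U) α := hω _ p α (by simpa using hU)
    _ = _ := by rw [dweight_cons, norm_smul, Real.norm_eq_abs]; ring

lemma differentiable_add_smul (hω : IsBBound 2 (fun p α => ω p α) C) (q v : E) (β : V) :
    Differentiable ℝ (fun t : ℝ => ω (q + t • v) β) := by
  have hstep := fun (U : List E) (hU : U.length < 2) =>
    hω.abs_pairF_diffChain_add_smul_sub_le hU (α := β)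
  refine LipschitzWith.differentiableAt_of_secondDiff_le (K := ‖v‖ * C * (‖v‖ * ‖β‖))
    (LipschitzWith.of_dist_le' (K := ‖v‖ * C * ‖β‖) fun x y => ?_) fun a s u => ?_
  · have h := hstep [] (by simp) (q + y • v) v (x - y)
    rw [pairF_diffChain_nil, pairF_diffChain_nil, add_assoc, ← add_smul, add_sub_cancel] at h
    simpa [dweight, Real.dist_eq] using h
  · have h := hstep [u • v] (by simp) (q + a • v) v s
    simp only [pairF_diffChain_cons, pairF_diffChain_nil] at h
    simp only [add_smul, ← add_assoc]
    calc _ = |ω (q + a • v + s • v + u • v) β - ω (q + a • v + s • v) β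
              - (ω (q + a • v + u • v) β - ω (q + a • v) β)| := by congr 1; ring
      _ ≤ _ := h
      _ = _ := by simp [dweight, norm_smul]; ring

end IsBBound

/-- For a `k`-form `ω` with finite `B^r` norm, `r ≥ 2` (here: admitting a
`B^r`-bound `C`), the Lie derivative `𝓛_v ω` (the directional derivative of `ω` in the
constant direction `v`) satisfies `‖𝓛_v ω‖_{B^{r−1}} ≤ ‖v‖·‖ω‖_{B^r}`: `‖v‖·C` is a
`B^{r−1}`-bound for `𝓛_v ω`. -/
theorem lie_derivative_form_bound (r : ℕ) (hr : 2 ≤ r) (ω : E → V →ₗ[ℝ] ℝ) (C : ℝ)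
    (hC : 0 ≤ C) (hω : IsBBound r (fun p α => ω p α) C) (v : E) :
    IsBBound (r - 1) (fun p α => deriv (fun t : ℝ => ω (p + t • v) α) 0) (‖v‖ * C) := by
  intro U p α hU
  have hline (q : E) (β : V) : DifferentiableAt ℝ (fun t : ℝ => ω (q + t • v) β) 0 :=
    (hω.mono hr).differentiable_add_smul q v β 0
  have hderiv : HasDerivAt (fun t : ℝ => pairF (fun p α => ω p α) (diffChain U (p + t • v) α))
      (pairF (fun p α => deriv (fun t : ℝ => ω (p + t • v) α) 0) (diffChain U p α)) 0 := by
    simpa only [diffChain_add_point] using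
      hasDerivAt_pairF_mapDomain_add_smul ω v hline (diffChain U p α)
  refine hderiv.le_of_lip' (by have := dweight_nonneg U α; positivity) (.of_forall fun t => ?_)
  simpa using hω.abs_pairF_diffChain_add_smul_sub_le (by omega) p v α t
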